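/- For every x > 0, |x·exp(x²/2)·(1 - Φ(x)) - 1/√(2π)| ≤ (2/√(2π))·(1/x²). -/

import Mathlib

open MeasureTheory Real

noncomputable def gpdf (t : ℝ) : ℝ := (Real.sqrt (2 * Real.pi))⁻¹ * Real.exp (-t ^ 2 / 2)

noncomputable def gcdf (x : ℝ) : ℝ := ∫ t in Set.Iic x, gpdf t

lemma sqrt_two_pi_pos : 0 < Real.sqrt (2 * Real.pi) :=
  Real.sqrt_pos.2 (by positivity)

lemma gpdf_pos (t : ℝ) : 0 < gpdf t := by
  unfold gpdf; positivity

lemma integrable_gpdf : Integrable gpdf := by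
  have h : Integrable fun t : ℝ => Real.exp (-(1/2 : ℝ) * t ^ 2) :=
    integrable_exp_neg_mul_sq (by norm_num)
  have h2 := h.const_mul ((Real.sqrt (2 * Real.pi))⁻¹)
  convert h2 using 2 with t
  unfold gpdf; ring_nf

lemma integral_gpdf : ∫ t, gpdf t = 1 := by
  unfold gpdf
  rw [MeasureTheory.integral_const_mul]
  have h : ∫ t : ℝ, Real.exp (-t ^ 2 / 2) = Real.sqrt (2 * Real.pi) := by
    have h2 := integral_gaussian (1/2 : ℝ)
    have he : (fun t : ℝ => Real.exp (-(1/2 : ℝ) * t ^ 2)) = fun t : ℝ => Real.exp (-t ^ 2 / 2) := by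
      funext t; ring_nf
    rw [he] at h2
    rw [h2]; norm_num [mul_comm]
  rw [h, inv_mul_cancel₀ sqrt_two_pi_pos.ne']

lemma hasDerivAt_gpdf (t : ℝ) : HasDerivAt gpdf (-t * gpdf t) t := by
  have h : HasDerivAt (fun s : ℝ => -s ^ 2 / 2) (-t) t := by
    have := ((hasDerivAt_pow 2 t).neg.div_const 2)
    refine this.congr_deriv ?_; ring
  have h2 := h.exp.const_mul ((Real.sqrt (2 * Real.pi))⁻¹)
  refine h2.congr_deriv ?_
  unfold gpdf; ring

lemma tendsto_gpdf : Filter.Tendsto gpdf Filter.atTop (nhds 0) := by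
  have h1 : Filter.Tendsto (fun t : ℝ => -t ^ 2 / 2) Filter.atTop Filter.atBot := by
    apply Filter.Tendsto.atBot_div_const (by norm_num : (0:ℝ) < 2)
    rw [Filter.tendsto_neg_atBot_iff]
    exact Filter.tendsto_pow_atTop (two_ne_zero)
  have h2 := (Real.tendsto_exp_atBot.comp h1).const_mul ((Real.sqrt (2 * Real.pi))⁻¹)
  simp only [Function.comp, mul_zero] at h2; exact h2

theorem gaussian_mills_estimate (x : ℝ) (hx : 0 < x) :
    |x * Real.exp (x ^ 2 / 2) * (1 - gcdf x) - (Real.sqrt (2 * Real.pi))⁻¹|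
      ≤ 2 / Real.sqrt (2 * Real.pi) * (1 / x ^ 2) := by
  set T : ℝ := ∫ t in Set.Ioi x, gpdf t with hT
  -- 1 - gcdf x = T
  have hIntg : IntegrableOn gpdf (Set.Ioi x) := integrable_gpdf.integrableOn
  have hsplit : gcdf x + T = 1 := by
    rw [hT, gcdf, intervalIntegral.integral_Iic_add_Ioi integrable_gpdf.integrableOn hIntg,
      integral_gpdf]
  have h1T : 1 - gcdf x = T := by linarith
  -- ∫_{Ioi x} t * gpdf t = gpdf x
  have I1 : ∫ t in Set.Ioi x, t * gpdf t = gpdf x := by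
    have hd : ∀ t ∈ Set.Ici x, HasDerivAt (fun s => -gpdf s) (t * gpdf t) t := by
      intro t _
      have := (hasDerivAt_gpdf t).neg
      refine this.congr_deriv ?_; ring
    have hpos : ∀ t ∈ Set.Ioi x, 0 ≤ t * gpdf t := fun t ht =>
      mul_nonneg (le_of_lt (hx.trans ht)) (gpdf_pos t).le
    have htd : Filter.Tendsto (fun s => -gpdf s) Filter.atTop (nhds 0) := by
      simpa using tendsto_gpdf.neg
    have := integral_Ioi_of_hasDerivAt_of_nonneg' hd hpos htd
    simpa using this
  -- ∫_{Ioi x} (gpdf t + gpdf t / t^2) = gpdf x / x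
  have hd2 : ∀ t ∈ Set.Ici x, HasDerivAt (fun s => -(gpdf s / s)) (gpdf t + gpdf t / t ^ 2) t := by
    intro t ht
    have htx : 0 < t := lt_of_lt_of_le hx ht
    have := ((hasDerivAt_gpdf t).div (hasDerivAt_id t) htx.ne').neg
    refine this.congr_deriv ?_
    simp only [id]
    field_simp
    ring
  have hpos2 : ∀ t ∈ Set.Ioi x, 0 ≤ gpdf t + gpdf t / t ^ 2 := by
    intro t ht
    have := gpdf_pos t
    positivity
  have htd2 : Filter.Tendsto (fun s => -(gpdf s / s)) Filter.atTop (nhds 0) := by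
    have : Filter.Tendsto (fun s => gpdf s * s⁻¹) Filter.atTop (nhds 0) := by
      simpa using tendsto_gpdf.mul tendsto_inv_atTop_zero
    simpa [div_eq_mul_inv] using this.neg
  have hInt2 : IntegrableOn (fun t => gpdf t + gpdf t / t ^ 2) (Set.Ioi x) :=
    integrableOn_Ioi_deriv_of_nonneg' hd2 hpos2 htd2
  have I2 : ∫ t in Set.Ioi x, (gpdf t + gpdf t / t ^ 2) = gpdf x / x := by
    have := integral_Ioi_of_hasDerivAt_of_nonneg' hd2 hpos2 htd2
    simpa using this
  have hIntq : IntegrableOn (fun t => gpdf t / t ^ 2) (Set.Ioi x) := by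
    exact (hInt2.sub hIntg).congr (Filter.Eventually.of_forall fun t => by
      simp [Pi.sub_apply])
  -- T + Q = gpdf x / x
  set Q : ℝ := ∫ t in Set.Ioi x, gpdf t / t ^ 2 with hQ
  have hsum : T + Q = gpdf x / x := by
    rw [hT, hQ, ← MeasureTheory.integral_add hIntg hIntq]
    exact I2
  have hQnn : 0 ≤ Q := by
    apply MeasureTheory.setIntegral_nonneg measurableSet_Ioi
    intro t ht
    have := gpdf_pos t
    positivity
  have hTub : T ≤ gpdf x / x := by linarith
  -- Q ≤ T / x^2
  have hQub : Q ≤ T / x ^ 2 := by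
    have : Q ≤ ∫ t in Set.Ioi x, gpdf t / x ^ 2 := by
      apply MeasureTheory.setIntegral_mono_on hIntq (hIntg.div_const _) measurableSet_Ioi
      intro t ht
      apply div_le_div_of_nonneg_left (gpdf_pos t).le (by positivity)
      have : x ≤ t := le_of_lt ht
      nlinarith
    rwa [MeasureTheory.integral_div] at this
  have hx2 : (0:ℝ) < x ^ 2 := by positivity
  have hg : 0 < gpdf x := gpdf_pos x
  have hE : 0 < Real.exp (x ^ 2 / 2) := Real.exp_pos _
  have hc : 0 < (Real.sqrt (2 * Real.pi))⁻¹ := by positivity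
  have hEg : Real.exp (x ^ 2 / 2) * gpdf x = (Real.sqrt (2 * Real.pi))⁻¹ := by
    unfold gpdf
    rw [mul_comm ((Real.sqrt (2 * Real.pi))⁻¹) _, ← mul_assoc, ← Real.exp_add,
      show x ^ 2 / 2 + -x ^ 2 / 2 = 0 by ring, Real.exp_zero, one_mul]
  -- division-free versions
  have hxT : x * T ≤ gpdf x := by
    have := (le_div_iff₀ hx).1 hTub
    linarith [this]
  have hsum' : x * T + x * Q = gpdf x := by
    field_simp at hsum
    linarith [hsum]
  have hQub' : x ^ 2 * Q ≤ T := by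
    have := (le_div_iff₀ hx2).1 hQub
    linarith [this]
  have hcube : x ^ 2 * gpdf x - gpdf x ≤ x ^ 3 * T := by
    nlinarith [hsum', hQub', hxT, hx, hQnn]
  set E : ℝ := Real.exp (x ^ 2 / 2) with hEdef
  set c : ℝ := (Real.sqrt (2 * Real.pi))⁻¹ with hcdef
  have hup : x * E * T ≤ c := by
    nlinarith [mul_le_mul_of_nonneg_left hxT hE.le]
  have hlow : c - c * (1 / x ^ 2) ≤ x * E * T := by
    have h1 := mul_le_mul_of_nonneg_left hcube hE.le
    have h2 : c * (1 / x ^ 2) * x ^ 2 = c := by field_simp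
    have h3 : (c - c * (1 / x ^ 2)) * x ^ 2 ≤ x * E * T * x ^ 2 := by nlinarith [h1, h2]
    exact le_of_mul_le_mul_right h3 hx2
  have hrhs : 2 / Real.sqrt (2 * Real.pi) * (1 / x ^ 2) = 2 * c * (1 / x ^ 2) := by
    rw [hcdef, div_eq_mul_inv]
  rw [h1T, abs_le, hrhs]
  have hinv : 0 < 1 / x ^ 2 := by positivity
  constructor
  · linarith [hlow, mul_pos hc hinv]
  · linarith [hup, mul_pos hc hinv]
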